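/- Let U ⊆ ℍ be open and let f : U → ℍ be given by f(x) = f₁(x₁,x₂,x₃,x₄)e₁ + ∑ₖ₌₂⁴ xₖ f₀(x₁,x₂,x₃,x₄)eₖ, where f₀, f₁ : ℝ⁴ → ℝ are C². If f is algebraic regular on U, then its quaternion derivative ∂f/∂x₁ : U → ℍ, which satisfies (∂f/∂x₁)(x) = (∂f₁/∂x₁)(x₁,x₂,x₃,x₄)e₁ + ∑ₖ₌₂⁴ xₖ (∂f₀/∂x₁)(x₁,x₂,x₃,x₄)eₖ, is also algebraic regular on U (with the C¹ functions ∂f₀/∂x₁ and ∂f₁/∂x₁ playing the roles of f₀ and f₁). -/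

import Mathlib

open scoped Quaternion

noncomputable section

/-- The standard basis `e₁ = 1, e₂ = i, e₃ = j, e₄ = k` of the quaternions. -/
def e : Fin 4 → ℍ[ℝ] := ![1, ⟨0,1,0,0⟩, ⟨0,0,1,0⟩, ⟨0,0,0,1⟩]

/-- The real coordinates of a quaternion. -/
def toTuple (x : ℍ[ℝ]) : Fin 4 → ℝ := ![x.re, x.imI, x.imJ, x.imK]
/-- The `i`-th partial derivative of a function `g : ℝ⁴ → ℝ`. -/
def pd (g : (Fin 4 → ℝ) → ℝ) (i : Fin 4) (p : Fin 4 → ℝ) : ℝ :=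
  fderiv ℝ g p (Pi.single i 1)

/-- `f` is given on `U` by `f(x) = f₁(x₁,x₂,x₃,x₄)e₁ + ∑ₖ₌₂⁴ xₖ f₀(x₁,x₂,x₃,x₄)eₖ`. -/
def Represents (f : ℍ[ℝ] → ℍ[ℝ]) (U : Set ℍ[ℝ]) (f₀ f₁ : (Fin 4 → ℝ) → ℝ) : Prop :=
  ∀ x ∈ U, f x = f₁ (toTuple x) • e 0 + (x.imI * f₀ (toTuple x)) • e 1 +
    (x.imJ * f₀ (toTuple x)) • e 2 + (x.imK * f₀ (toTuple x)) • e 3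

/-- The generalized Cauchy–Riemann equations (ii) of algebraic regularity, at `p ∈ ℝ⁴`. -/
def RegularEqs (f₀ f₁ : (Fin 4 → ℝ) → ℝ) (p : Fin 4 → ℝ) : Prop :=
  pd f₁ 0 p = f₀ p + p 1 * pd f₀ 1 p + p 2 * pd f₀ 2 p + p 3 * pd f₀ 3 p ∧
  (∀ i : Fin 4, i ≠ 0 → pd f₁ i p = -(p i * pd f₀ 0 p)) ∧
  (∀ i j : Fin 4, i ≠ 0 → j ≠ 0 → i ≠ j → p i * pd f₀ j p = p j * pd f₀ i p)

/-- `f` is algebraic regular at `c ∈ U`. -/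
def AlgebraicRegularAt (f : ℍ[ℝ] → ℍ[ℝ]) (U : Set ℍ[ℝ]) (c : ℍ[ℝ]) : Prop :=
  ∃ f₀ f₁ : (Fin 4 → ℝ) → ℝ, ContDiff ℝ 1 f₀ ∧ ContDiff ℝ 1 f₁ ∧
    Represents f U f₀ f₁ ∧ RegularEqs f₀ f₁ (toTuple c)

/-- `f` is algebraic regular on `U`. -/
def AlgebraicRegularOn (f : ℍ[ℝ] → ℍ[ℝ]) (U : Set ℍ[ℝ]) : Prop :=
  ∀ c ∈ U, AlgebraicRegularAt f U c

/-! Any two representations of `f` on `U` have the same `f₁` and agree in `f₀` where `x₂ ≠ 0`,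
a dense open part of `U`. So the regularity equations, which algebraic regularity provides at each
point for *some* representation, hold for `(f₀, f₁)` there, and by continuity of the first
partials on all of `U`. Differentiating them in `x₁`, which commutes with multiplication by
`x₂, x₃, x₄`, and interchanging second partials of the `C²` functions `f₀, f₁` gives the equations
for `(∂f₀/∂x₁, ∂f₁/∂x₁)`; differentiating the representation of `f` itself in direction `e₁`
likewise only differentiates `f₀` and `f₁`. -/

open scoped Topology
open Filter Set

local notation "ℝ⁴" => Fin 4 → ℝ

def toTupleCLE : ℍ[ℝ] ≃L[ℝ] ℝ⁴ :=
  LinearEquiv.toContinuousLinearEquiv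
    (QuaternionAlgebra.linearEquivTuple (-1 : ℝ) 0 (-1) : ℍ[ℝ] ≃ₗ[ℝ] ℝ⁴)

@[simp] lemma coe_toTupleCLE : ⇑toTupleCLE = toTuple := by
  ext x i; fin_cases i <;> rfl

lemma toTuple_e_zero : toTuple (e 0) = Pi.single 0 1 := by
  ext i; fin_cases i <;> simp [toTuple, e]

def repFun (f₀ f₁ : ℝ⁴ → ℝ) (p : ℝ⁴) : ℍ[ℝ] :=
  f₁ p • e 0 + (p 1 * f₀ p) • e 1 + (p 2 * f₀ p) • e 2 + (p 3 * f₀ p) • e 3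

lemma represents_iff_eqOn {f : ℍ[ℝ] → ℍ[ℝ]} {U : Set ℍ[ℝ]} {f₀ f₁ : ℝ⁴ → ℝ} :
    Represents f U f₀ f₁ ↔ EqOn f (repFun f₀ f₁ ∘ toTuple) U := Iff.rfl

lemma repFun_eq_mk (f₀ f₁ : ℝ⁴ → ℝ) (p : ℝ⁴) :
    repFun f₀ f₁ p = ⟨f₁ p, p 1 * f₀ p, p 2 * f₀ p, p 3 * f₀ p⟩ := by
  ext
  · change f₁ p * 1 + p 1 * f₀ p * 0 + p 2 * f₀ p * 0 + p 3 * f₀ p * 0 = f₁ p; ring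
  · change f₁ p * 0 + p 1 * f₀ p * 1 + p 2 * f₀ p * 0 + p 3 * f₀ p * 0 = p 1 * f₀ p; ring
  · change f₁ p * 0 + p 1 * f₀ p * 0 + p 2 * f₀ p * 1 + p 3 * f₀ p * 0 = p 2 * f₀ p; ring
  · change f₁ p * 0 + p 1 * f₀ p * 0 + p 2 * f₀ p * 0 + p 3 * f₀ p * 1 = p 3 * f₀ p; ring

lemma eq_of_repFun_eq {f₀ f₁ g₀ g₁ : ℝ⁴ → ℝ} {p : ℝ⁴} (h : repFun f₀ f₁ p = repFun g₀ g₁ p)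
    (hp : p 1 ≠ 0) : f₀ p = g₀ p ∧ f₁ p = g₁ p := by
  rw [repFun_eq_mk, repFun_eq_mk] at h
  obtain ⟨h₁, h₀, -, -⟩ := QuaternionAlgebra.mk.inj h
  exact ⟨mul_left_cancel₀ hp h₀, h₁⟩

lemma Represents.eventuallyEq {f : ℍ[ℝ] → ℍ[ℝ]} {U : Set ℍ[ℝ]} {f₀ f₁ g₀ g₁ : ℝ⁴ → ℝ}
    (hU : IsOpen U) (hf : Represents f U f₀ f₁) (hg : Represents f U g₀ g₁) {x : ℍ[ℝ]}
    (hx : x ∈ U) (hx₁ : x.imI ≠ 0) :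
    f₀ =ᶠ[𝓝 (toTuple x)] g₀ ∧ f₁ =ᶠ[𝓝 (toTuple x)] g₁ := by
  have hN : toTupleCLE.symm ⁻¹' U ∩ {q | q 1 ≠ 0} ∈ 𝓝 (toTuple x) :=
    ((hU.preimage toTupleCLE.symm.continuous).inter
      (isOpen_ne_fun (continuous_apply 1) continuous_const)).mem_nhds
      ⟨by simpa [← coe_toTupleCLE] using hx, hx₁⟩
  have heq : ∀ q ∈ toTupleCLE.symm ⁻¹' U ∩ {q | q 1 ≠ 0}, f₀ q = g₀ q ∧ f₁ q = g₁ q := by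
    rintro q ⟨hqU, hq₁⟩
    have hq : toTuple (toTupleCLE.symm q) = q := by simp [← coe_toTupleCLE]
    have hrep := (represents_iff_eqOn.1 hf hqU).symm.trans (represents_iff_eqOn.1 hg hqU)
    exact eq_of_repFun_eq (by simpa only [Function.comp_apply, hq] using hrep) hq₁
  exact ⟨mem_of_superset hN fun q hq => (heq q hq).1, mem_of_superset hN fun q hq => (heq q hq).2⟩

section PartialDerivatives

variable {g h : ℝ⁴ → ℝ} {p : ℝ⁴}

lemma pd_congr_of_eventuallyEq (hgh : g =ᶠ[𝓝 p] h) (i : Fin 4) : pd g i p = pd h i p := by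
  rw [pd, pd, hgh.fderiv_eq]

lemma pd_add (hg : DifferentiableAt ℝ g p) (hh : DifferentiableAt ℝ h p) (i : Fin 4) :
    pd (fun q => g q + h q) i p = pd g i p + pd h i p := by
  simp [pd, fderiv_fun_add hg hh]

lemma pd_neg (i : Fin 4) : pd (fun q => -g q) i p = -pd g i p := by
  simp [pd, fderiv_fun_neg]

lemma hasFDerivAt_coord_mul {g' : ℝ⁴ →L[ℝ] ℝ} (hg : HasFDerivAt g g' p) (j : Fin 4) :
    HasFDerivAt (fun q => q j * g q) (p j • g' + g p • ContinuousLinearMap.proj j) p :=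
  (hasFDerivAt_apply j p).mul hg

lemma pd_coord_mul_of_ne (hg : DifferentiableAt ℝ g p) {i j : Fin 4} (hji : j ≠ i) :
    pd (fun q => q j * g q) i p = p j * pd g i p := by
  simp [pd, (hasFDerivAt_coord_mul hg.hasFDerivAt j).fderiv, Pi.single_eq_of_ne hji]

lemma contDiff_pd {m n : WithTop ℕ∞} (hg : ContDiff ℝ n g) (hmn : m + 1 ≤ n) (i : Fin 4) :
    ContDiff ℝ m (pd g i) :=
  (hg.fderiv_right hmn).clm_apply contDiff_const

lemma continuous_pd (hg : ContDiff ℝ 1 g) (i : Fin 4) : Continuous (pd g i) :=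
  (hg.continuous_fderiv one_ne_zero).clm_apply continuous_const

lemma pd_comm (hg : ContDiff ℝ 2 g) (i j : Fin 4) : pd (pd g i) j p = pd (pd g j) i p := by
  have hg' : DifferentiableAt ℝ (fderiv ℝ g) p :=
    (hg.fderiv_right (m := 1) le_rfl).differentiable one_ne_zero p
  have hsymm := hg.contDiffAt.isSymmSndFDerivAt (x := p) (by simp)
  have hpd_pd : ∀ k l : Fin 4,
      pd (pd g k) l p = fderiv ℝ (fderiv ℝ g) p (Pi.single l 1) (Pi.single k 1) := fun k l => by
    unfold pd
    rw [fderiv_clm_apply hg' (differentiableAt_const _)]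
    simp
  rw [hpd_pd, hpd_pd, hsymm]

end PartialDerivatives

lemma fderiv_repFun_single_zero {f₀ f₁ : ℝ⁴ → ℝ} {p : ℝ⁴} (hf₀ : DifferentiableAt ℝ f₀ p)
    (hf₁ : DifferentiableAt ℝ f₁ p) :
    fderiv ℝ (repFun f₀ f₁) p (Pi.single 0 1) = repFun (pd f₀ 0) (pd f₁ 0) p := by
  have hD : HasFDerivAt (repFun f₀ f₁) _ p := (((hf₁.hasFDerivAt.smul_const (e 0)).add
    ((hasFDerivAt_coord_mul hf₀.hasFDerivAt 1).smul_const (e 1))).add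
    ((hasFDerivAt_coord_mul hf₀.hasFDerivAt 2).smul_const (e 2))).add
    ((hasFDerivAt_coord_mul hf₀.hasFDerivAt 3).smul_const (e 3))
  rw [hD.fderiv]
  simp [repFun, pd]

theorem Represents.fderiv_apply_e_zero {f : ℍ[ℝ] → ℍ[ℝ]} {U : Set ℍ[ℝ]} {f₀ f₁ : ℝ⁴ → ℝ}
    (hU : IsOpen U) (hf : Represents f U f₀ f₁) (hf₀ : Differentiable ℝ f₀)
    (hf₁ : Differentiable ℝ f₁) :
    Represents (fun x => fderiv ℝ f x (e 0)) U (pd f₀ 0) (pd f₁ 0) := by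
  intro x hx
  have hloc : f =ᶠ[𝓝 x] repFun f₀ f₁ ∘ toTupleCLE := by
    rw [coe_toTupleCLE]
    exact eventuallyEq_of_mem (hU.mem_nhds hx) hf
  change fderiv ℝ f x (e 0) = repFun (pd f₀ 0) (pd f₁ 0) (toTuple x)
  rw [hloc.fderiv_eq, toTupleCLE.comp_right_fderiv]
  simp only [ContinuousLinearMap.coe_comp, ContinuousLinearEquiv.coe_coe, Function.comp_apply,
    coe_toTupleCLE, toTuple_e_zero]
  exact fderiv_repFun_single_zero (hf₀ _) (hf₁ _)

section RegularEqs

variable {f₀ f₁ g₀ g₁ : ℝ⁴ → ℝ} {p : ℝ⁴}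

lemma RegularEqs.congr_of_eventuallyEq (h : RegularEqs g₀ g₁ p) (h₀ : f₀ =ᶠ[𝓝 p] g₀)
    (h₁ : f₁ =ᶠ[𝓝 p] g₁) : RegularEqs f₀ f₁ p := by
  simpa only [RegularEqs, pd_congr_of_eventuallyEq h₀, pd_congr_of_eventuallyEq h₁,
    h₀.eq_of_nhds] using h

lemma isClosed_setOf_regularEqs (hf₀ : ContDiff ℝ 1 f₀) (hf₁ : ContDiff ℝ 1 f₁) :
    IsClosed {p | RegularEqs f₀ f₁ p} := by
  have c := hf₀.continuous
  have c₀ := continuous_pd hf₀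
  have c₁ := continuous_pd hf₁
  simp only [RegularEqs, ofPred_and, ofPred_forall]
  refine .inter (isClosed_eq (c₁ 0) ?_) (.inter ?_ ?_)
  · fun_prop
  · exact isClosed_iInter fun i => isClosed_iInter fun _ => isClosed_eq (c₁ i) (by fun_prop)
  · exact isClosed_iInter fun i => isClosed_iInter fun j => isClosed_iInter fun _ =>
      isClosed_iInter fun _ => isClosed_iInter fun _ => isClosed_eq (by fun_prop) (by fun_prop)

end RegularEqs

theorem AlgebraicRegularOn.regularEqs_of_represents {f : ℍ[ℝ] → ℍ[ℝ]} {U : Set ℍ[ℝ]}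
    {f₀ f₁ : ℝ⁴ → ℝ} (hU : IsOpen U) (hreg : AlgebraicRegularOn f U)
    (hf : Represents f U f₀ f₁) (hf₀ : ContDiff ℝ 1 f₀) (hf₁ : ContDiff ℝ 1 f₁) {x : ℍ[ℝ]}
    (hx : x ∈ U) : RegularEqs f₀ f₁ (toTuple x) := by
  have hV : IsOpen (toTupleCLE.symm ⁻¹' U) := hU.preimage toTupleCLE.symm.continuous
  have hW : ∀ p ∈ toTupleCLE.symm ⁻¹' U ∩ {q | q 1 ≠ 0}, RegularEqs f₀ f₁ p := by
    rintro p ⟨hpU, hp₁⟩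
    have hp : toTuple (toTupleCLE.symm p) = p := by simp [← coe_toTupleCLE]
    obtain ⟨g₀, g₁, -, -, hg, hgp⟩ := hreg _ hpU
    obtain ⟨h₀, h₁⟩ := hf.eventuallyEq hU hg hpU ((congrFun hp 1).trans_ne hp₁)
    rw [hp] at h₀ h₁ hgp
    exact hgp.congr_of_eventuallyEq h₀ h₁
  have hdense : Dense {q : ℝ⁴ | q 1 ≠ 0} :=
    (dense_compl_singleton 0).preimage (isOpenMap_eval 1)
  exact closure_minimal hW (isClosed_setOf_regularEqs hf₀ hf₁)
    (hdense.open_subset_closure_inter hV (by simpa [← coe_toTupleCLE] using hx))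

theorem regularEqs_pd_zero {f₀ f₁ : ℝ⁴ → ℝ} {p : ℝ⁴} (hf₀ : ContDiff ℝ 2 f₀)
    (hf₁ : ContDiff ℝ 2 f₁) (h : ∀ᶠ q in 𝓝 p, RegularEqs f₀ f₁ q) :
    RegularEqs (pd f₀ 0) (pd f₁ 0) p := by
  have d₀ : Differentiable ℝ f₀ := hf₀.differentiable two_ne_zero
  have d : ∀ i, Differentiable ℝ (pd f₀ i) := fun i =>
    (contDiff_pd (m := 1) hf₀ le_rfl i).differentiable one_ne_zero
  refine ⟨?_, fun i hi => ?_, fun i j hi hj hij => ?_⟩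
  · rw [pd_congr_of_eventuallyEq (h.mono fun q hq => hq.1), pd_add (by fun_prop) (by fun_prop),
      pd_add (by fun_prop) (by fun_prop), pd_add (by fun_prop) (by fun_prop),
      pd_coord_mul_of_ne (d 1 p) (by decide), pd_coord_mul_of_ne (d 2 p) (by decide),
      pd_coord_mul_of_ne (d 3 p) (by decide), pd_comm hf₀ 1, pd_comm hf₀ 2, pd_comm hf₀ 3]
  · rw [pd_comm hf₁, pd_congr_of_eventuallyEq (h.mono fun q hq => hq.2.1 i hi), pd_neg,
      pd_coord_mul_of_ne (d 0 p) hi]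
  · rw [pd_comm hf₀ 0 j, pd_comm hf₀ 0 i, ← pd_coord_mul_of_ne (d j p) hi,
      ← pd_coord_mul_of_ne (d i p) hj]
    exact pd_congr_of_eventuallyEq (h.mono fun q hq => hq.2.2 i j hi hj hij) 0

/-- if `f₀, f₁` are `C²` and `f` is algebraic regular on `U`, then the
quaternion derivative `∂f/∂x₁`, which is represented by `∂f₀/∂x₁` and `∂f₁/∂x₁`,
is also algebraic regular on `U`. -/
theorem algebraicRegularOn_quaternionDeriv (U : Set ℍ[ℝ]) (hU : IsOpen U)
    (f : ℍ[ℝ] → ℍ[ℝ]) (f₀ f₁ : (Fin 4 → ℝ) → ℝ)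
    (hf₀ : ContDiff ℝ 2 f₀) (hf₁ : ContDiff ℝ 2 f₁)
    (hf : Represents f U f₀ f₁)
    (hreg : AlgebraicRegularOn f U) :
    Represents (fun x => fderiv ℝ f x (e 0)) U (pd f₀ 0) (pd f₁ 0) ∧
    AlgebraicRegularOn (fun x => fderiv ℝ f x (e 0)) U := by
  have hrep := hf.fderiv_apply_e_zero hU (hf₀.differentiable two_ne_zero)
    (hf₁.differentiable two_ne_zero)
  refine ⟨hrep, fun c hc => ⟨pd f₀ 0, pd f₁ 0, contDiff_pd hf₀ le_rfl 0,
    contDiff_pd hf₁ le_rfl 0, hrep, regularEqs_pd_zero hf₀ hf₁ ?_⟩⟩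
  have hnhds : toTupleCLE.symm ⁻¹' U ∈ 𝓝 (toTuple c) :=
    (hU.preimage toTupleCLE.symm.continuous).mem_nhds (by simpa [← coe_toTupleCLE] using hc)
  filter_upwards [hnhds] with p hp
  simpa [← coe_toTupleCLE] using
    hreg.regularEqs_of_represents hU hf (hf₀.of_le one_le_two) (hf₁.of_le one_le_two) hp
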